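/- Let m ≥ 1, a > 1 a real number, and let γ = [[a·I_{2m}, C],[Cᵀ, a·I_{2m}]] be a real symmetric 4m×4m matrix with (γ · (σ_m ⊕ σ_m))² = −I_{4m}. Then: (i) σ_m Cᵀ σ_m = Cᵀ; (ii) C·Cᵀ = (a² − 1)·I_{2m}; (iii) C σ_m Cᵀ = −(a² − 1)·σ_m; and (iv) there exists a real 2m×2m matrix O which is both orthogonal (O Oᵀ = I) and symplectic (O σ_m Oᵀ = σ_m) such that C = √(a² − 1) · O · Λ̄, where Λ̄ := ⊕_{k=1}^m Λ. -/

import Mathlib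

open Matrix

/-- The standard symplectic form `σ_m = ⊕_{i=1}^m [[0,-1],[1,0]]` on `ℝ^{2m}`. -/
noncomputable def symp (m : ℕ) : Matrix (Fin (2 * m)) (Fin (2 * m)) ℝ :=
  Matrix.of fun i j =>
    if i.val = j.val + 1 ∧ i.val % 2 = 1 then 1
    else if j.val = i.val + 1 ∧ j.val % 2 = 1 then -1 else 0

/-- `σ_{2m} = σ_m ⊕ σ_m`. -/
noncomputable def sympBig (m : ℕ) :
    Matrix (Fin (2 * m) ⊕ Fin (2 * m)) (Fin (2 * m) ⊕ Fin (2 * m)) ℝ :=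
  Matrix.fromBlocks (symp m) 0 0 (symp m)

/-- `Λ̄ = ⊕_{k=1}^m Λ = diag(1,-1,…,1,-1)`. -/
noncomputable def lambdaBar (m : ℕ) : Matrix (Fin (2 * m)) (Fin (2 * m)) ℝ :=
  Matrix.diagonal fun i => if i.val % 2 = 0 then (1 : ℝ) else -1

/-!
Blockwise, `γ (σ ⊕ σ) = [[aσ, Cσ], [Cᵀσ, aσ]]`, so the off-diagonal block of
`(γ (σ ⊕ σ))² = -1` gives `σCᵀσ = Cᵀ` (as `a ≠ 0`) and the diagonal block gives
`CσCᵀσ = (a² - 1)`. Since `σ² = -1`, the first relation says that `σ` anticommutes with `Cᵀ`,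
which turns the second into (ii) and (iii). Finally `O := (a² - 1)^(-1/2) C Λ̄` is orthogonal
by (ii), and symplectic by (iii) because `Λ̄ σ Λ̄ = -σ`.
-/

section Algebra

variable {K A : Type*} [CommRing K] [Ring A] [Algebra K A]

theorem mul_mul_eq_neg_of_mul_self_eq_neg_one {J : A} (hJ : J * J = -1) (X : A) :
    X * J * J = -X := by
  rw [mul_assoc, hJ, mul_neg_one]

theorem mul_eq_neg_mul_of_mul_mul_eq_self {J X : A} (hJ : J * J = -1) (h : J * X * J = X) :
    X * J = -(J * X) :=
  calc X * J = J * X * J * J := by rw [h]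
    _ = -(J * X) := mul_mul_eq_neg_of_mul_self_eq_neg_one hJ _

theorem mul_mul_eq_neg_smul_of_mul_mul_mul_mul_eq_smul_one {c : K} {J B D : A}
    (hJ : J * J = -1) (h : B * J * D * J = c • 1) : B * J * D = -(c • J) :=
  calc B * J * D = -(B * J * D * J * J) := by
        rw [mul_mul_eq_neg_of_mul_self_eq_neg_one hJ, neg_neg]
    _ = -(c • J) := by rw [h, smul_mul_assoc, one_mul]

theorem mul_eq_smul_one_of_mul_mul_mul_mul_eq_smul_one {c : K} {J B D : A}
    (hJ : J * J = -1) (hD : J * D * J = D) (h : B * J * D * J = c • 1) : B * D = c • 1 :=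
  calc B * D = -(B * (D * J) * J) := by
        rw [← mul_assoc, mul_mul_eq_neg_of_mul_self_eq_neg_one hJ, neg_neg]
    _ = c • 1 := by
        rw [mul_eq_neg_mul_of_mul_mul_eq_self hJ hD, mul_neg, neg_mul, neg_neg, ← mul_assoc, h]

end Algebra

section Matrix

variable {K n : Type*} [Field K] [Fintype n] [DecidableEq n]

theorem block_relations_of_mul_self_eq_neg_one {a : K} (ha : a ≠ 0) {J B D : Matrix n n K}
    (hJ : J * J = -1)
    (h : (fromBlocks (a • 1) B D (a • 1) * fromBlocks J 0 0 J) *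
      (fromBlocks (a • 1) B D (a • 1) * fromBlocks J 0 0 J) = -1) :
    J * D * J = D ∧ B * J * D * J = (a ^ 2 - 1) • 1 := by
  have hprod : fromBlocks (a • 1) B D (a • 1) * fromBlocks J 0 0 J =
      fromBlocks (a • J) (B * J) (D * J) (a • J) := by
    simp [fromBlocks_multiply]
  rw [hprod, fromBlocks_multiply, ← fromBlocks_one, fromBlocks_neg, fromBlocks_inj] at h
  obtain ⟨h11, -, h21, -⟩ := h
  simp only [smul_mul_assoc, mul_smul_comm, smul_smul, hJ, ← mul_assoc,
    mul_mul_eq_neg_of_mul_self_eq_neg_one hJ] at h11 h21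
  constructor
  · have h21' : a • (J * D * J - D) = 0 := by linear_combination (norm := module) h21
    exact sub_eq_zero.1 ((smul_eq_zero.1 h21').resolve_left ha)
  · linear_combination (norm := module) h11

theorem exists_orthogonal_symplectic_mul_eq {c : K} (hc : c ≠ 0) {J L C : Matrix n n K}
    (hL : L * L = 1) (hLt : Lᵀ = L) (hLJ : L * J * L = -J)
    (hCC : C * Cᵀ = c ^ 2 • 1) (hCJC : C * J * Cᵀ = -(c ^ 2 • J)) :
    ∃ O : Matrix n n K, O * Oᵀ = 1 ∧ O * J * Oᵀ = J ∧ C = c • (O * L) := by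
  have hc2 : c⁻¹ * c⁻¹ * c ^ 2 = 1 := by field_simp
  refine ⟨c⁻¹ • (C * L), ?orthogonal, ?symplectic, ?factorization⟩
  case orthogonal =>
    rw [transpose_smul, transpose_mul, hLt, smul_mul_smul_comm, mul_assoc C, ← mul_assoc L, hL,
      one_mul, hCC, smul_smul, hc2, one_smul]
  case symplectic =>
    have hCLJLC : C * L * J * (L * Cᵀ) = c ^ 2 • J := by
      rw [← mul_assoc, mul_assoc C L J, mul_assoc C (L * J) L, hLJ, mul_neg, neg_mul, hCJC,
        neg_neg]
    rw [transpose_smul, transpose_mul, hLt, smul_mul_assoc, smul_mul_smul_comm, hCLJLC, smul_smul,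
      hc2, one_smul]
  case factorization =>
    rw [smul_mul_assoc, mul_assoc, hL, mul_one, smul_smul, mul_inv_cancel₀ hc, one_smul]

end Matrix

def sympPartner {m : ℕ} (i : Fin (2 * m)) : Fin (2 * m) :=
  ⟨if i.val % 2 = 0 then i.val + 1 else i.val - 1, by split <;> omega⟩

theorem sympPartner_sympPartner {m : ℕ} (i : Fin (2 * m)) : sympPartner (sympPartner i) = i := by
  ext; simp only [sympPartner]; split_ifs <;> omega

theorem symp_apply_of_ne_sympPartner {m : ℕ} {i j : Fin (2 * m)} (h : j ≠ sympPartner i) :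
    symp m i j = 0 := by
  have h' : j.val ≠ if i.val % 2 = 0 then i.val + 1 else i.val - 1 := fun e => h (Fin.ext e)
  simp only [symp, of_apply]
  split_ifs at h' ⊢ <;> first | rfl | omega

theorem symp_mul_symp (m : ℕ) : symp m * symp m = -1 := by
  ext i j
  rw [mul_apply, Finset.sum_eq_single (sympPartner i)
    (fun k _ hk => by rw [symp_apply_of_ne_sympPartner hk, zero_mul]) (by simp), Matrix.neg_apply]
  by_cases hij : i = j
  · subst hij
    simp only [symp, sympPartner, of_apply, one_apply_eq]
    split_ifs <;> (try norm_num) <;> omega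
  · have hj : j ≠ sympPartner (sympPartner i) := by rwa [sympPartner_sympPartner, ne_comm]
    rw [symp_apply_of_ne_sympPartner hj, mul_zero, one_apply_ne hij, neg_zero]

theorem lambdaBar_mul_lambdaBar (m : ℕ) : lambdaBar m * lambdaBar m = 1 := by
  rw [lambdaBar, diagonal_mul_diagonal, ← diagonal_one]
  congr 1
  funext i
  split_ifs <;> norm_num

theorem lambdaBar_mul_symp_mul_lambdaBar (m : ℕ) :
    lambdaBar m * symp m * lambdaBar m = -symp m := by
  ext i j
  simp only [lambdaBar, mul_diagonal, diagonal_mul, Matrix.neg_apply, symp, of_apply]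
  split_ifs <;> (try norm_num) <;> omega

theorem pure_state_offdiagonal_block_general (m : ℕ) (a : ℝ) (ha : 1 < a)
    (C : Matrix (Fin (2 * m)) (Fin (2 * m)) ℝ)
    (hpure : (Matrix.fromBlocks (a • (1 : Matrix (Fin (2 * m)) (Fin (2 * m)) ℝ)) C
        Cᵀ (a • 1) * sympBig m) *
      (Matrix.fromBlocks (a • (1 : Matrix (Fin (2 * m)) (Fin (2 * m)) ℝ)) C
        Cᵀ (a • 1) * sympBig m) = -1) :
    symp m * Cᵀ * symp m = Cᵀ ∧
    C * Cᵀ = (a ^ 2 - 1) • (1 : Matrix (Fin (2 * m)) (Fin (2 * m)) ℝ) ∧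
    C * symp m * Cᵀ = -((a ^ 2 - 1) • symp m) ∧
    ∃ O : Matrix (Fin (2 * m)) (Fin (2 * m)) ℝ,
      O * Oᵀ = 1 ∧ O * symp m * Oᵀ = symp m ∧
      C = Real.sqrt (a ^ 2 - 1) • (O * lambdaBar m) := by
  have hσ := symp_mul_symp m
  obtain ⟨hi, hblock⟩ := block_relations_of_mul_self_eq_neg_one (by positivity) hσ hpure
  have hii := mul_eq_smul_one_of_mul_mul_mul_mul_eq_smul_one hσ hi hblock
  have hiii := mul_mul_eq_neg_smul_of_mul_mul_mul_mul_eq_smul_one hσ hblock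
  refine ⟨hi, hii, hiii, ?_⟩
  have hpos : 0 < a ^ 2 - 1 := by nlinarith
  rw [← Real.sq_sqrt hpos.le] at hii hiii
  exact exists_orthogonal_symplectic_mul_eq (Real.sqrt_pos.2 hpos).ne'
    (lambdaBar_mul_lambdaBar m) (diagonal_transpose _) (lambdaBar_mul_symp_mul_lambdaBar m) hii hiii

/-- **Part (b) of the proof of Lemma 1.** If `γ = [[a·I, C],[Cᵀ, a·I]]` with `a > 1` is the
covariance matrix of a pure state, i.e. `(γ·(σ_m ⊕ σ_m))² = -1`, then
(i) `σCᵀσ = Cᵀ`; (ii) `CCᵀ = (a²-1)·I`; (iii) `CσCᵀ = -(a²-1)·σ`; and (iv)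
`C = √(a²-1)·O·Λ̄` for some real matrix `O` which is both orthogonal and symplectic. -/
theorem pure_state_offdiagonal_block (m : ℕ) (hm : 1 ≤ m) (a : ℝ) (ha : 1 < a)
    (C : Matrix (Fin (2 * m)) (Fin (2 * m)) ℝ)
    (hpure : (Matrix.fromBlocks (a • (1 : Matrix (Fin (2 * m)) (Fin (2 * m)) ℝ)) C
        Cᵀ (a • 1) * sympBig m) *
      (Matrix.fromBlocks (a • (1 : Matrix (Fin (2 * m)) (Fin (2 * m)) ℝ)) C
        Cᵀ (a • 1) * sympBig m) = -1) :
    symp m * Cᵀ * symp m = Cᵀ ∧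
    C * Cᵀ = (a ^ 2 - 1) • (1 : Matrix (Fin (2 * m)) (Fin (2 * m)) ℝ) ∧
    C * symp m * Cᵀ = -((a ^ 2 - 1) • symp m) ∧
    ∃ O : Matrix (Fin (2 * m)) (Fin (2 * m)) ℝ,
      O * Oᵀ = 1 ∧ O * symp m * Oᵀ = symp m ∧
      C = Real.sqrt (a ^ 2 - 1) • (O * lambdaBar m) :=
  pure_state_offdiagonal_block_general m a ha C hpure
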